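/- Let ν > 0, c > 0, f_0 > 0. For every a⁰ ∈ l²(ℕ) with a⁰_j ≥ 0 for all j, there exists a solution a(t) of the viscous dyadic model on [0, ∞) with a(0) = a⁰. Moreover, this solution satisfies a_j(t) ≥ 0 for all j ≥ 0 and all t ≥ 0. -/
import Mathlib

set_option linter.unusedSectionVars false
set_option linter.unusedVariables false


open Filter MeasureTheory intervalIntegral

/-- Right-hand side of the dyadic model ODE for the `j`-th component:
`d/dt a_j = f_j - ν 2^{2j} a_j + 2^{c(j-1)} a_{j-1}² - 2^{cj} a_j a_{j+1}`,
with the conventions `a_{-1} = 0`, `f_0 = f₀`, `f_j = 0` for `j ≥ 1`. -/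
noncomputable def dyadicRHS (ν c f₀ : ℝ) (a : ℕ → ℝ) (j : ℕ) : ℝ :=
  (if j = 0 then f₀ else 0) - ν * (2 : ℝ) ^ (2 * j) * a j
    + (if j = 0 then 0 else (2 : ℝ) ^ (c * ((j : ℝ) - 1)) * a (j - 1) ^ 2)
    - (2 : ℝ) ^ (c * (j : ℝ)) * a j * a (j + 1)

namespace Stmt10

noncomputable def B (ν f₀ : ℝ) (a0 : ℕ → ℝ) : ℝ := (∑' j, a0 j ^ 2) + 4 * f₀ ^ 2 / ν ^ 2 + 1

noncomputable def sB (ν f₀ : ℝ) (a0 : ℕ → ℝ) : ℝ := Real.sqrt (B ν f₀ a0)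

section ctx

variable (ν c f₀ : ℝ) (a0 : ℕ → ℝ)

noncomputable def M (j : ℕ) : ℝ :=
  f₀ + ν * (2 : ℝ) ^ (2 * j) * sB ν f₀ a0
    + ((2 : ℝ) ^ (c * ((j : ℝ) - 1)) + (2 : ℝ) ^ (c * (j : ℝ))) * B ν f₀ a0

noncomputable def L (j : ℕ) : ℝ :=
  ν * (2 : ℝ) ^ (2 * j)
    + ((2 : ℝ) ^ (c * ((j : ℝ) - 1)) + (2 : ℝ) ^ (c * (j : ℝ))) * (2 * sB ν f₀ a0)

noncomputable def M' (j : ℕ) : ℝ :=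
  max (M ν c f₀ a0 (j - 1)) (max (M ν c f₀ a0 j) (M ν c f₀ a0 (j + 1)))

noncomputable def Mbar (n : ℕ) : ℝ := ∑ j ∈ Finset.range (n + 1), M ν c f₀ a0 j ^ 2

noncomputable def den (n : ℕ) : ℝ :=
  (n + 1 : ℝ) + 2 * ν + ν * (2 : ℝ) ^ (2 * n) + (2 : ℝ) ^ (c * (n : ℝ)) * sB ν f₀ a0
    + Mbar ν c f₀ a0 n / (ν * B ν f₀ a0)

noncomputable def hh (n : ℕ) : ℝ := (den ν c f₀ a0 n)⁻¹

noncomputable def D (n : ℕ) (x : ℕ → ℝ) (j : ℕ) : ℝ :=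
  if j ≤ n then dyadicRHS ν c f₀ x j else 0

noncomputable def X (n : ℕ) : ℕ → ℕ → ℝ
  | 0 => fun j => if j ≤ n then a0 j else 0
  | k + 1 => fun j => X n k j + hh ν c f₀ a0 n * D ν c f₀ n (X n k) j

noncomputable def K (n : ℕ) (t : ℝ) : ℕ := ⌊t / hh ν c f₀ a0 n⌋₊

noncomputable def A (n : ℕ) (t : ℝ) (j : ℕ) : ℝ :=
  X ν c f₀ a0 n (K ν c f₀ a0 n t) j
    + (t - K ν c f₀ a0 n t * hh ν c f₀ a0 n)
      * D ν c f₀ n (X ν c f₀ a0 n (K ν c f₀ a0 n t)) j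

end ctx

section lemmas

variable {ν c f₀ : ℝ} {a0 : ℕ → ℝ}
variable (hν : 0 < ν) (hc : 0 < c) (hf : 0 < f₀) (hpos : ∀ j : ℕ, 0 ≤ a0 j)
  (ha0 : Summable fun j : ℕ => a0 j ^ 2)

section Bfacts
include hν hf

lemma B_pos : 0 < B ν f₀ a0 := by
  have h1 : 0 ≤ ∑' j, a0 j ^ 2 := tsum_nonneg fun j => sq_nonneg _
  have h2 : 0 ≤ 4 * f₀ ^ 2 / ν ^ 2 := by positivity
  unfold B; linarith

lemma sB_pos : 0 < sB ν f₀ a0 := Real.sqrt_pos.2 (B_pos hν hf)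

lemma sB_sq : sB ν f₀ a0 ^ 2 = B ν f₀ a0 := Real.sq_sqrt (B_pos hν hf).le

lemma two_f_le : 2 * f₀ ≤ ν * sB ν f₀ a0 := by
  have h1 : 0 ≤ ∑' j, a0 j ^ 2 := tsum_nonneg fun j => sq_nonneg _
  have h2 : (2 * f₀ / ν) ^ 2 ≤ B ν f₀ a0 := by
    have he : (2 * f₀ / ν) ^ 2 = 4 * f₀ ^ 2 / ν ^ 2 := by rw [div_pow]; ring_nf
    unfold B; linarith
  have h3 : 2 * f₀ / ν ≤ sB ν f₀ a0 := by
    rw [sB, show (2:ℝ) * f₀ / ν = √((2 * f₀ / ν)^2) from (Real.sqrt_sq (by positivity)).symm]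
    exact Real.sqrt_le_sqrt h2
  calc 2 * f₀ = ν * (2 * f₀ / ν) := by field_simp
    _ ≤ ν * sB ν f₀ a0 := by gcongr

lemma M_pos (j : ℕ) : 0 < M ν c f₀ a0 j := by
  have := sB_pos (a0 := a0) hν hf
  have := B_pos (a0 := a0) hν hf
  have h1 : (0:ℝ) < (2 : ℝ) ^ (c * ((j : ℝ) - 1)) := Real.rpow_pos_of_pos (by norm_num) _
  have h2 : (0:ℝ) < (2 : ℝ) ^ (c * (j : ℝ)) := Real.rpow_pos_of_pos (by norm_num) _
  have h3 : (0:ℝ) < (2 : ℝ) ^ (2 * j) := by positivity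
  have m1 : (0:ℝ) < ν * (2 : ℝ) ^ (2 * j) * sB ν f₀ a0 := by
    apply mul_pos (mul_pos hν h3); assumption
  have m2 : (0:ℝ) < ((2 : ℝ) ^ (c * ((j : ℝ) - 1)) + (2 : ℝ) ^ (c * (j : ℝ))) * B ν f₀ a0 :=
    mul_pos (add_pos h1 h2) (B_pos hν hf)
  unfold M; linarith

lemma L_nonneg (j : ℕ) : 0 ≤ L ν c f₀ a0 j := by
  have := sB_pos (a0 := a0) hν hf
  have h1 : (0:ℝ) < (2 : ℝ) ^ (c * ((j : ℝ) - 1)) := Real.rpow_pos_of_pos (by norm_num) _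
  have h2 : (0:ℝ) < (2 : ℝ) ^ (c * (j : ℝ)) := Real.rpow_pos_of_pos (by norm_num) _
  have h3 : (0:ℝ) < (2 : ℝ) ^ (2 * j) := by positivity
  have m1 : (0:ℝ) ≤ ν * (2 : ℝ) ^ (2 * j) := by positivity
  have m2 : (0:ℝ) ≤ ((2 : ℝ) ^ (c * ((j : ℝ) - 1)) + (2 : ℝ) ^ (c * (j : ℝ)))
      * (2 * sB ν f₀ a0) := by
    apply mul_nonneg (by positivity); linarith
  unfold L; linarith

lemma M'_pos (j : ℕ) : 0 < M' ν c f₀ a0 j :=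
  lt_max_of_lt_left (M_pos hν hf _)

lemma Mbar_pos (n : ℕ) : 0 < Mbar ν c f₀ a0 n :=
  Finset.sum_pos (fun j _ => pow_pos (M_pos hν hf j) 2) ⟨0, by simp⟩

lemma den_pos (n : ℕ) : 0 < den ν c f₀ a0 n := by
  have h1 := sB_pos (a0 := a0) hν hf
  have h2 := B_pos (a0 := a0) hν hf
  have h3 := Mbar_pos (a0 := a0) (c := c) hν hf n
  have h4 : (0:ℝ) < (2 : ℝ) ^ (c * (n : ℝ)) := Real.rpow_pos_of_pos (by norm_num) _
  have h5 : (0:ℝ) < (2 : ℝ) ^ (2 * n) := by positivity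
  have h6 : (0:ℝ) < Mbar ν c f₀ a0 n / (ν * B ν f₀ a0) := by positivity
  have h7 : (0:ℝ) < (n + 1 : ℝ) := by positivity
  unfold den; nlinarith

lemma hh_pos (n : ℕ) : 0 < hh ν c f₀ a0 n := inv_pos.2 (den_pos hν hf n)

lemma hh_mul_le {n : ℕ} {Y : ℝ} (hY : Y ≤ den ν c f₀ a0 n) : hh ν c f₀ a0 n * Y ≤ 1 := by
  have hd := den_pos (a0 := a0) (c := c) hν hf n
  rw [hh]
  calc (den ν c f₀ a0 n)⁻¹ * Y ≤ (den ν c f₀ a0 n)⁻¹ * den ν c f₀ a0 n := by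
        apply mul_le_mul_of_nonneg_left hY (by positivity)
    _ = 1 := inv_mul_cancel₀ hd.ne'

lemma hh_le_inv (n : ℕ) : hh ν c f₀ a0 n ≤ ((n : ℝ) + 1)⁻¹ := by
  have hd := den_pos (a0 := a0) (c := c) hν hf n
  have h1 := sB_pos (a0 := a0) hν hf
  have h2 := B_pos (a0 := a0) hν hf
  have h3 := Mbar_pos (a0 := a0) (c := c) hν hf n
  have h4 : (0:ℝ) < (2 : ℝ) ^ (c * (n : ℝ)) := Real.rpow_pos_of_pos (by norm_num) _
  have h5 : (0:ℝ) < (2 : ℝ) ^ (2 * n) := by positivity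
  have h6 : (0:ℝ) < Mbar ν c f₀ a0 n / (ν * B ν f₀ a0) := by positivity
  apply inv_anti₀ (by positivity)
  unfold den; nlinarith

lemma hh_tendsto : Tendsto (hh ν c f₀ a0) atTop (nhds 0) := by
  have h0 : Tendsto (fun n : ℕ => ((n : ℝ) + 1)⁻¹) atTop (nhds 0) :=
    tendsto_one_div_add_atTop_nhds_zero_nat.congr (by intro n; rw [one_div])
  refine squeeze_zero (fun n => (hh_pos hν hf n).le) (fun n => hh_le_inv hν hf n) h0

end Bfacts

lemma abs4 (p q r s : ℝ) : |p - q + r - s| ≤ |p| + |q| + |r| + |s| := by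
  calc |p - q + r - s| ≤ |p - q + r| + |s| := abs_sub _ _
    _ ≤ (|p - q| + |r|) + |s| := by gcongr; exact abs_add_le _ _
    _ ≤ ((|p| + |q|) + |r|) + |s| := by gcongr; exact abs_sub _ _
    _ = |p| + |q| + |r| + |s| := by ring

lemma abs3 (p q r : ℝ) : |-p + q - r| ≤ |p| + |q| + |r| := by
  calc |-p + q - r| ≤ |-p + q| + |r| := abs_sub _ _
    _ ≤ (|-p| + |q|) + |r| := by gcongr; exact abs_add_le _ _
    _ = |p| + |q| + |r| := by rw [abs_neg]

/-- bound for the vector field on the box -/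
lemma abs_dyadicRHS_le (hν : 0 < ν) (hf : 0 < f₀) {u : ℕ → ℝ} (j : ℕ)
    (hu : ∀ i, 0 ≤ u i) (hub : ∀ i, u i ≤ sB ν f₀ a0) :
    |dyadicRHS ν c f₀ u j| ≤ M ν c f₀ a0 j := by
  have hB := sB_sq (a0 := a0) hν hf
  have hsb := (sB_pos (a0 := a0) hν hf).le
  have h1 : (0:ℝ) < (2 : ℝ) ^ (c * ((j : ℝ) - 1)) := Real.rpow_pos_of_pos (by norm_num) _
  have h2 : (0:ℝ) < (2 : ℝ) ^ (c * (j : ℝ)) := Real.rpow_pos_of_pos (by norm_num) _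
  have h3 : (0:ℝ) < (2 : ℝ) ^ (2 * j) := by positivity
  have e1 : |if j = 0 then f₀ else 0| ≤ f₀ := by
    split
    · rw [abs_of_nonneg hf.le]
    · simpa using hf.le
  have e2 : |ν * (2 : ℝ) ^ (2 * j) * u j| ≤ ν * (2 : ℝ) ^ (2 * j) * sB ν f₀ a0 := by
    rw [abs_of_nonneg (mul_nonneg (by positivity) (hu j))]
    exact mul_le_mul_of_nonneg_left (hub j) (by positivity)
  have e3 : |if j = 0 then 0 else (2 : ℝ) ^ (c * ((j : ℝ) - 1)) * u (j - 1) ^ 2|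
      ≤ (2 : ℝ) ^ (c * ((j : ℝ) - 1)) * B ν f₀ a0 := by
    have hq : u (j-1) ^ 2 ≤ B ν f₀ a0 := by
      rw [← hB]; exact pow_le_pow_left₀ (hu _) (hub _) 2
    split
    · simpa using (mul_pos h1 (B_pos (a0 := a0) hν hf)).le
    · rw [abs_of_nonneg (mul_nonneg h1.le (sq_nonneg _))]
      exact mul_le_mul_of_nonneg_left hq h1.le
  have e4 : |(2 : ℝ) ^ (c * (j : ℝ)) * u j * u (j + 1)|
      ≤ (2 : ℝ) ^ (c * (j : ℝ)) * B ν f₀ a0 := by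
    rw [abs_of_nonneg (mul_nonneg (mul_nonneg h2.le (hu j)) (hu (j+1)))]
    calc (2 : ℝ) ^ (c * (j : ℝ)) * u j * u (j + 1)
        ≤ (2 : ℝ) ^ (c * (j : ℝ)) * sB ν f₀ a0 * sB ν f₀ a0 := by
          apply mul_le_mul (mul_le_mul_of_nonneg_left (hub j) h2.le) (hub _) (hu _) (by positivity)
      _ = (2 : ℝ) ^ (c * (j : ℝ)) * B ν f₀ a0 := by rw [← hB]; ring
  have := abs4 (if j = 0 then f₀ else 0) (ν * (2 : ℝ) ^ (2 * j) * u j)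
    (if j = 0 then 0 else (2 : ℝ) ^ (c * ((j : ℝ) - 1)) * u (j - 1) ^ 2)
    ((2 : ℝ) ^ (c * (j : ℝ)) * u j * u (j + 1))
  unfold M; unfold dyadicRHS; linarith

/-- Lipschitz bound for the vector field on the box -/
lemma dyadicRHS_lip (hν : 0 < ν) (hf : 0 < f₀) {u v : ℕ → ℝ} (j : ℕ) {d : ℝ}
    (hu : ∀ i, |u i| ≤ sB ν f₀ a0) (hv : ∀ i, |v i| ≤ sB ν f₀ a0)
    (h1 : |u (j - 1) - v (j - 1)| ≤ d) (h2 : |u j - v j| ≤ d)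
    (h3 : |u (j + 1) - v (j + 1)| ≤ d) :
    |dyadicRHS ν c f₀ u j - dyadicRHS ν c f₀ v j| ≤ L ν c f₀ a0 j * d := by
  have hsb := (sB_pos (a0 := a0) hν hf).le
  have hp1 : (0:ℝ) < (2 : ℝ) ^ (c * ((j : ℝ) - 1)) := Real.rpow_pos_of_pos (by norm_num) _
  have hp2 : (0:ℝ) < (2 : ℝ) ^ (c * (j : ℝ)) := Real.rpow_pos_of_pos (by norm_num) _
  have hp3 : (0:ℝ) < (2 : ℝ) ^ (2 * j) := by positivity
  have hd : 0 ≤ d := le_trans (abs_nonneg _) h2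
  have key : dyadicRHS ν c f₀ u j - dyadicRHS ν c f₀ v j
      = -(ν * (2 : ℝ) ^ (2 * j) * (u j - v j))
        + (if j = 0 then 0 else (2 : ℝ) ^ (c * ((j : ℝ) - 1)) * (u (j-1) ^ 2 - v (j-1) ^ 2))
        - (2 : ℝ) ^ (c * (j : ℝ)) * (u j * u (j+1) - v j * v (j+1)) := by
    unfold dyadicRHS; split <;> ring
  have e1 : |ν * (2 : ℝ) ^ (2 * j) * (u j - v j)| ≤ ν * (2 : ℝ) ^ (2 * j) * d := by
    rw [abs_mul, abs_of_nonneg (by positivity : (0:ℝ) ≤ ν * (2 : ℝ) ^ (2 * j))]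
    exact mul_le_mul_of_nonneg_left h2 (by positivity)
  have e2 : |if j = 0 then 0 else (2 : ℝ) ^ (c * ((j : ℝ) - 1)) * (u (j-1) ^ 2 - v (j-1) ^ 2)|
      ≤ (2 : ℝ) ^ (c * ((j : ℝ) - 1)) * (2 * sB ν f₀ a0) * d := by
    split
    · simp; positivity
    · rw [abs_mul, abs_of_nonneg hp1.le]
      have : |u (j-1) ^ 2 - v (j-1) ^ 2| ≤ 2 * sB ν f₀ a0 * d := by
        have heq : u (j-1) ^ 2 - v (j-1) ^ 2 = (u (j-1) + v (j-1)) * (u (j-1) - v (j-1)) := by ring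
        rw [heq, abs_mul]
        have hs : |u (j-1) + v (j-1)| ≤ 2 * sB ν f₀ a0 := by
          calc |u (j-1) + v (j-1)| ≤ |u (j-1)| + |v (j-1)| := abs_add_le _ _
            _ ≤ 2 * sB ν f₀ a0 := by have := hu (j-1); have := hv (j-1); linarith
        exact mul_le_mul hs h1 (abs_nonneg _) (by positivity)
      calc (2 : ℝ) ^ (c * ((j : ℝ) - 1)) * |u (j-1) ^ 2 - v (j-1) ^ 2|
          ≤ (2 : ℝ) ^ (c * ((j : ℝ) - 1)) * (2 * sB ν f₀ a0 * d) := by gcongr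
        _ = (2 : ℝ) ^ (c * ((j : ℝ) - 1)) * (2 * sB ν f₀ a0) * d := by ring
  have e3 : |(2 : ℝ) ^ (c * (j : ℝ)) * (u j * u (j+1) - v j * v (j+1))|
      ≤ (2 : ℝ) ^ (c * (j : ℝ)) * (2 * sB ν f₀ a0) * d := by
    rw [abs_mul, abs_of_nonneg hp2.le]
    have : |u j * u (j+1) - v j * v (j+1)| ≤ 2 * sB ν f₀ a0 * d := by
      have heq : u j * u (j+1) - v j * v (j+1)
          = u j * (u (j+1) - v (j+1)) + v (j+1) * (u j - v j) := by ring
      rw [heq]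
      calc |u j * (u (j+1) - v (j+1)) + v (j+1) * (u j - v j)|
          ≤ |u j * (u (j+1) - v (j+1))| + |v (j+1) * (u j - v j)| := abs_add_le _ _
        _ = |u j| * |u (j+1) - v (j+1)| + |v (j+1)| * |u j - v j| := by rw [abs_mul, abs_mul]
        _ ≤ sB ν f₀ a0 * d + sB ν f₀ a0 * d := by
            have b1 := mul_le_mul (hu j) h3 (abs_nonneg _) hsb
            have b2 := mul_le_mul (hv (j+1)) h2 (abs_nonneg _) hsb
            linarith
        _ = 2 * sB ν f₀ a0 * d := by ring
    calc (2 : ℝ) ^ (c * (j : ℝ)) * |u j * u (j+1) - v j * v (j+1)|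
        ≤ (2 : ℝ) ^ (c * (j : ℝ)) * (2 * sB ν f₀ a0 * d) := by gcongr
      _ = (2 : ℝ) ^ (c * (j : ℝ)) * (2 * sB ν f₀ a0) * d := by ring
  rw [key]
  have := abs3 (ν * (2 : ℝ) ^ (2 * j) * (u j - v j))
    (if j = 0 then 0 else (2 : ℝ) ^ (c * ((j : ℝ) - 1)) * (u (j-1) ^ 2 - v (j-1) ^ 2))
    ((2 : ℝ) ^ (c * (j : ℝ)) * (u j * u (j+1) - v j * v (j+1)))
  have hL : L ν c f₀ a0 j * d = ν * (2 : ℝ) ^ (2 * j) * d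
      + (2 : ℝ) ^ (c * ((j : ℝ) - 1)) * (2 * sB ν f₀ a0) * d
      + (2 : ℝ) ^ (c * (j : ℝ)) * (2 * sB ν f₀ a0) * d := by unfold L; ring
  linarith

end lemmas

section invariant

variable {ν c f₀ : ℝ} {a0 : ℕ → ℝ}
variable (hν : 0 < ν) (hc : 0 < c) (hf : 0 < f₀) (hpos : ∀ j : ℕ, 0 ≤ a0 j)
  (ha0 : Summable fun j : ℕ => a0 j ^ 2)

include hν hc hf hpos ha0

lemma X_inv (n k : ℕ) :
    (∀ j, 0 ≤ X ν c f₀ a0 n k j) ∧ (∀ j, n < j → X ν c f₀ a0 n k j = 0) ∧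
      (∑ j ∈ Finset.range (n + 1), X ν c f₀ a0 n k j ^ 2 ≤ B ν f₀ a0) := by
  induction k with
  | zero =>
    refine ⟨fun j => ?_, fun j hj => ?_, ?_⟩
    · simp only [X]; split
      · exact hpos j
      · exact le_rfl
    · simp only [X]; rw [if_neg (by omega)]
    · have h1 : ∑ j ∈ Finset.range (n + 1), X ν c f₀ a0 n 0 j ^ 2
          = ∑ j ∈ Finset.range (n + 1), a0 j ^ 2 := by
        apply Finset.sum_congr rfl
        intro j hj
        simp only [X]
        rw [if_pos (by simp at hj; omega)]
      rw [h1]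
      have h2 : ∑ j ∈ Finset.range (n + 1), a0 j ^ 2 ≤ ∑' j, a0 j ^ 2 :=
        Summable.sum_le_tsum _ (fun j _ => sq_nonneg _) ha0
      have h3 : (0:ℝ) ≤ 4 * f₀ ^ 2 / ν ^ 2 := by positivity
      unfold B; linarith
  | succ k IH =>
    obtain ⟨hnn, hz, hE⟩ := IH
    set x := X ν c f₀ a0 n k with hx
    set h := hh ν c f₀ a0 n with hhdef
    have hpos' := hh_pos (a0 := a0) (c := c) hν hf n
    have hsb := sB_pos (a0 := a0) hν hf
    have hB := B_pos (a0 := a0) hν hf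
    -- coordinate bound
    have hsq : ∀ j, x j ^ 2 ≤ B ν f₀ a0 := by
      intro j
      by_cases hj : j ≤ n
      · calc x j ^ 2 ≤ ∑ i ∈ Finset.range (n + 1), x i ^ 2 :=
            Finset.single_le_sum (f := fun i => x i ^ 2) (fun i _ => sq_nonneg _)
              (Finset.mem_range.mpr (show j < n + 1 by omega))
          _ ≤ B ν f₀ a0 := hE
      · rw [hz j (by omega)]; simpa using hB.le
    have hcoord : ∀ j, x j ≤ sB ν f₀ a0 := by
      intro j
      have := hsq j
      nlinarith [hnn j, sB_sq (a0 := a0) hν hf, hsb]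
    -- step identity
    have hstep : ∀ j, X ν c f₀ a0 n (k+1) j = x j + h * D ν c f₀ n x j := by
      intro j; rfl
    -- nonnegativity
    have hnn' : ∀ j, 0 ≤ X ν c f₀ a0 n (k+1) j := by
      intro j
      rw [hstep j]
      unfold D
      split
      case isTrue hj =>
        have key : x j + h * dyadicRHS ν c f₀ x j
            = x j * (1 - h * (ν * (2:ℝ) ^ (2*j) + (2:ℝ) ^ (c * (j:ℝ)) * x (j+1)))
              + h * ((if j = 0 then f₀ else 0)
                + (if j = 0 then 0 else (2:ℝ) ^ (c * ((j:ℝ) - 1)) * x (j-1) ^ 2)) := by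
          unfold dyadicRHS; ring
        rw [key]
        have hb1 : ν * (2:ℝ) ^ (2*j) + (2:ℝ) ^ (c * (j:ℝ)) * x (j+1) ≤ den ν c f₀ a0 n := by
          have m1 : (2:ℝ) ^ (2*j) ≤ (2:ℝ) ^ (2*n) :=
            pow_le_pow_right₀ one_le_two (by omega)
          have m2 : (2:ℝ) ^ (c * (j:ℝ)) ≤ (2:ℝ) ^ (c * (n:ℝ)) := by
            apply Real.rpow_le_rpow_of_exponent_le one_le_two
            have : (j:ℝ) ≤ (n:ℝ) := by exact_mod_cast hj
            nlinarith
          have m3 : (2:ℝ) ^ (c * (j:ℝ)) * x (j+1) ≤ (2:ℝ) ^ (c * (n:ℝ)) * sB ν f₀ a0 := by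
            apply mul_le_mul m2 (hcoord _) (hnn _)
            exact (Real.rpow_pos_of_pos (by norm_num) _).le
          have m4 : ν * (2:ℝ) ^ (2*j) ≤ ν * (2:ℝ) ^ (2*n) :=
            mul_le_mul_of_nonneg_left m1 hν.le
          have m5 : (0:ℝ) ≤ Mbar ν c f₀ a0 n / (ν * B ν f₀ a0) :=
            div_nonneg (Mbar_pos (a0 := a0) hν hf n).le (by positivity)
          have m6 : (0:ℝ) ≤ (n + 1 : ℝ) := by positivity
          unfold den; linarith
        have hb2 : h * (ν * (2:ℝ) ^ (2*j) + (2:ℝ) ^ (c * (j:ℝ)) * x (j+1)) ≤ 1 :=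
          hh_mul_le hν hf hb1
        have t1 : 0 ≤ x j * (1 - h * (ν * (2:ℝ) ^ (2*j) + (2:ℝ) ^ (c * (j:ℝ)) * x (j+1))) :=
          mul_nonneg (hnn j) (by linarith)
        have t2 : 0 ≤ (if j = 0 then f₀ else 0)
            + (if j = 0 then 0 else (2:ℝ) ^ (c * ((j:ℝ) - 1)) * x (j-1) ^ 2) := by
          have p1 : (0:ℝ) ≤ if j = 0 then f₀ else 0 := by split <;> simp [hf.le]
          have p2 : (0:ℝ) ≤ if j = 0 then 0 else (2:ℝ) ^ (c * ((j:ℝ) - 1)) * x (j-1) ^ 2 := by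
            split
            · exact le_rfl
            · positivity
          linarith
        nlinarith [hpos'.le]
      case isFalse hj =>
        rw [hz j (by omega)]; simp
    refine ⟨hnn', fun j hj => ?_, ?_⟩
    · rw [hstep j]
      rw [hz j hj]
      unfold D
      rw [if_neg (by omega)]
      ring
    -- energy
    · have hexp : ∑ j ∈ Finset.range (n + 1), X ν c f₀ a0 n (k+1) j ^ 2
          = ∑ j ∈ Finset.range (n + 1), x j ^ 2
            + 2 * h * ∑ j ∈ Finset.range (n + 1), x j * dyadicRHS ν c f₀ x j
            + h ^ 2 * ∑ j ∈ Finset.range (n + 1), dyadicRHS ν c f₀ x j ^ 2 := by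
        rw [Finset.mul_sum, Finset.mul_sum, ← Finset.sum_add_distrib, ← Finset.sum_add_distrib]
        apply Finset.sum_congr rfl
        intro j hj
        rw [hstep j]
        unfold D
        rw [if_pos (by simp at hj; omega)]
        ring
      -- flux computation
      have hflux : ∑ j ∈ Finset.range (n + 1), x j * dyadicRHS ν c f₀ x j
          ≤ f₀ * sB ν f₀ a0 - ν * ∑ j ∈ Finset.range (n + 1), x j ^ 2 := by
        have hsplit : ∀ j, x j * dyadicRHS ν c f₀ x j
            = x j * (if j = 0 then f₀ else 0)
              - ν * ((2:ℝ) ^ (2*j) * x j ^ 2)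
              + x j * (if j = 0 then 0 else (2:ℝ) ^ (c * ((j:ℝ) - 1)) * x (j-1) ^ 2)
              - (2:ℝ) ^ (c * (j:ℝ)) * x j ^ 2 * x (j+1) := by
          intro j; unfold dyadicRHS; ring
        have hsum : ∑ j ∈ Finset.range (n + 1), x j * dyadicRHS ν c f₀ x j
            = (∑ j ∈ Finset.range (n + 1), x j * (if j = 0 then f₀ else 0))
              - ν * ∑ j ∈ Finset.range (n + 1), (2:ℝ) ^ (2*j) * x j ^ 2
              + (∑ j ∈ Finset.range (n + 1),
                  x j * (if j = 0 then 0 else (2:ℝ) ^ (c * ((j:ℝ) - 1)) * x (j-1) ^ 2))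
              - ∑ j ∈ Finset.range (n + 1), (2:ℝ) ^ (c * (j:ℝ)) * x j ^ 2 * x (j+1) := by
          rw [Finset.mul_sum, ← Finset.sum_sub_distrib, ← Finset.sum_add_distrib,
            ← Finset.sum_sub_distrib]
          exact Finset.sum_congr rfl fun j _ => hsplit j
        have hT1 : ∑ j ∈ Finset.range (n + 1), x j * (if j = 0 then f₀ else 0)
            = x 0 * f₀ := by
          rw [Finset.sum_eq_single_of_mem 0 (by simp)]
          · simp
          · intro j _ hj0; rw [if_neg hj0]; ring
        have hT3 : ∑ j ∈ Finset.range (n + 1),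
              x j * (if j = 0 then 0 else (2:ℝ) ^ (c * ((j:ℝ) - 1)) * x (j-1) ^ 2)
            = ∑ i ∈ Finset.range n, (2:ℝ) ^ (c * (i:ℝ)) * x i ^ 2 * x (i+1) := by
          rw [Finset.sum_range_succ']
          have hcong : ∀ i ∈ Finset.range n,
              x (i+1) * (if i + 1 = 0 then (0:ℝ)
                else (2:ℝ) ^ (c * ((↑(i+1):ℝ) - 1)) * x ((i+1) - 1) ^ 2)
              = (2:ℝ) ^ (c * (i:ℝ)) * x i ^ 2 * x (i+1) := by
            intro i _
            rw [if_neg (Nat.succ_ne_zero i)]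
            have hc1 : ((i+1 : ℕ) : ℝ) - 1 = (i : ℝ) := by push_cast; ring
            rw [hc1, Nat.add_sub_cancel]
            ring
          rw [Finset.sum_congr rfl hcong]
          simp
        have hT4 : ∑ j ∈ Finset.range (n + 1), (2:ℝ) ^ (c * (j:ℝ)) * x j ^ 2 * x (j+1)
            = ∑ i ∈ Finset.range n, (2:ℝ) ^ (c * (i:ℝ)) * x i ^ 2 * x (i+1) := by
          rw [Finset.sum_range_succ, hz (n+1) (by omega)]
          simp
        have hdiss : ∑ j ∈ Finset.range (n + 1), x j ^ 2
            ≤ ∑ j ∈ Finset.range (n + 1), (2:ℝ) ^ (2*j) * x j ^ 2 := by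
          apply Finset.sum_le_sum
          intro j _
          have : (1:ℝ) ≤ (2:ℝ) ^ (2*j) := one_le_pow₀ one_le_two
          nlinarith [sq_nonneg (x j)]
        have hx0 : x 0 * f₀ ≤ f₀ * sB ν f₀ a0 := by
          rw [mul_comm]
          exact mul_le_mul_of_nonneg_left (hcoord 0) hf.le
        rw [hsum, hT1, hT3, hT4]
        have := mul_le_mul_of_nonneg_left hdiss hν.le
        linarith
      have hD2 : ∑ j ∈ Finset.range (n + 1), dyadicRHS ν c f₀ x j ^ 2 ≤ Mbar ν c f₀ a0 n := by
        apply Finset.sum_le_sum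
        intro j _
        have hb := abs_dyadicRHS_le (a0 := a0) (c := c) hν hf j hnn hcoord
        calc dyadicRHS ν c f₀ x j ^ 2 = |dyadicRHS ν c f₀ x j| ^ 2 := (sq_abs _).symm
          _ ≤ M ν c f₀ a0 j ^ 2 := by
              apply pow_le_pow_left₀ (abs_nonneg _) hb
      -- combine
      have c1 : h * (2 * ν) ≤ 1 := by
        apply hh_mul_le hν hf
        have h1 := sB_pos (a0 := a0) hν hf
        have h3 := Mbar_pos (a0 := a0) (c := c) hν hf n
        have h4 : (0:ℝ) < (2 : ℝ) ^ (c * (n : ℝ)) := Real.rpow_pos_of_pos (by norm_num) _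
        have h5 : (0:ℝ) < (2 : ℝ) ^ (2 * n) := by positivity
        have h6 : (0:ℝ) < Mbar ν c f₀ a0 n / (ν * B ν f₀ a0) := by positivity
        have h7 : (0:ℝ) < (n + 1 : ℝ) := by positivity
        unfold den; nlinarith
      have c2 : h * Mbar ν c f₀ a0 n ≤ ν * B ν f₀ a0 := by
        have := hh_mul_le (a0 := a0) hν hf (le_refl (den ν c f₀ a0 n))
        have h8 : h * (Mbar ν c f₀ a0 n / (ν * B ν f₀ a0)) ≤ 1 := by
          apply hh_mul_le hν hf
          have h1 := sB_pos (a0 := a0) hν hf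
          have h4 : (0:ℝ) < (2 : ℝ) ^ (c * (n : ℝ)) := Real.rpow_pos_of_pos (by norm_num) _
          have h5 : (0:ℝ) < (2 : ℝ) ^ (2 * n) := by positivity
          have h7 : (0:ℝ) < (n + 1 : ℝ) := by positivity
          unfold den; nlinarith
        have h9 : (0:ℝ) < ν * B ν f₀ a0 := by positivity
        calc h * Mbar ν c f₀ a0 n = h * (Mbar ν c f₀ a0 n / (ν * B ν f₀ a0)) * (ν * B ν f₀ a0) := by
              field_simp
          _ ≤ 1 * (ν * B ν f₀ a0) := mul_le_mul_of_nonneg_right h8 h9.le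
          _ = ν * B ν f₀ a0 := one_mul _
      have c3 : 2 * (f₀ * sB ν f₀ a0) ≤ ν * B ν f₀ a0 := by
        have := two_f_le (a0 := a0) hν hf
        have hs2 := sB_sq (a0 := a0) hν hf
        nlinarith [hsb]
      rw [hexp]
      set E := ∑ j ∈ Finset.range (n + 1), x j ^ 2 with hEdef
      have hEnn : 0 ≤ E := Finset.sum_nonneg fun j _ => sq_nonneg _
      have k1 : 2 * h * ∑ j ∈ Finset.range (n + 1), x j * dyadicRHS ν c f₀ x j
          ≤ 2 * h * (f₀ * sB ν f₀ a0 - ν * E) := by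
        apply mul_le_mul_of_nonneg_left hflux (by positivity)
      have k2 : h ^ 2 * ∑ j ∈ Finset.range (n + 1), dyadicRHS ν c f₀ x j ^ 2
          ≤ h * (ν * B ν f₀ a0) := by
        calc h ^ 2 * ∑ j ∈ Finset.range (n + 1), dyadicRHS ν c f₀ x j ^ 2
            ≤ h ^ 2 * Mbar ν c f₀ a0 n := by
              apply mul_le_mul_of_nonneg_left hD2 (by positivity)
          _ = h * (h * Mbar ν c f₀ a0 n) := by ring
          _ ≤ h * (ν * B ν f₀ a0) := mul_le_mul_of_nonneg_left c2 hpos'.le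
      -- E + 2h(f₀ sB - νE) + h(νB) ≤ B
      nlinarith [mul_nonneg hpos'.le (sub_nonneg.2 hE), hpos'.le]

end invariant

section interp

variable {ν c f₀ : ℝ} {a0 : ℕ → ℝ}
variable (hν : 0 < ν) (hc : 0 < c) (hf : 0 < f₀) (hpos : ∀ j : ℕ, 0 ≤ a0 j)
  (ha0 : Summable fun j : ℕ => a0 j ^ 2)

include hν hc hf hpos ha0

lemma X_nonneg (n k j : ℕ) : 0 ≤ X ν c f₀ a0 n k j := (X_inv hν hc hf hpos ha0 n k).1 j

lemma X_zero (n k : ℕ) {j : ℕ} (hj : n < j) : X ν c f₀ a0 n k j = 0 :=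
  (X_inv hν hc hf hpos ha0 n k).2.1 j hj

lemma X_energy (n k m : ℕ) : ∑ j ∈ Finset.range m, X ν c f₀ a0 n k j ^ 2 ≤ B ν f₀ a0 := by
  have base := (X_inv hν hc hf hpos ha0 n k).2.2
  by_cases hm : m ≤ n + 1
  · calc ∑ j ∈ Finset.range m, X ν c f₀ a0 n k j ^ 2
        ≤ ∑ j ∈ Finset.range (n+1), X ν c f₀ a0 n k j ^ 2 :=
          Finset.sum_le_sum_of_subset_of_nonneg
            (Finset.range_subset_range.mpr hm) (fun i _ _ => sq_nonneg _)
      _ ≤ B ν f₀ a0 := base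
  · have : ∑ j ∈ Finset.range m, X ν c f₀ a0 n k j ^ 2
        = ∑ j ∈ Finset.range (n+1), X ν c f₀ a0 n k j ^ 2 := by
      symm
      apply Finset.sum_subset (Finset.range_subset_range.mpr (by omega))
      intro j _ hj
      rw [X_zero hν hc hf hpos ha0 n k (by simp at hj; omega)]
      simp
    rw [this]; exact base

lemma X_le_sB (n k j : ℕ) : X ν c f₀ a0 n k j ≤ sB ν f₀ a0 := by
  have hsb := sB_pos (a0 := a0) hν hf
  have hsq : X ν c f₀ a0 n k j ^ 2 ≤ B ν f₀ a0 := by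
    calc X ν c f₀ a0 n k j ^ 2
        ≤ ∑ i ∈ Finset.range (j+1), X ν c f₀ a0 n k i ^ 2 :=
          Finset.single_le_sum (f := fun i => X ν c f₀ a0 n k i ^ 2)
            (fun i _ => sq_nonneg _) (Finset.mem_range.mpr (by omega))
      _ ≤ B ν f₀ a0 := X_energy hν hc hf hpos ha0 n k (j+1)
  nlinarith [X_nonneg hν hc hf hpos ha0 n k j, sB_sq (a0 := a0) hν hf]

lemma X_step (n k j : ℕ) :
    X ν c f₀ a0 n (k+1) j = X ν c f₀ a0 n k j
      + hh ν c f₀ a0 n * D ν c f₀ n (X ν c f₀ a0 n k) j := rfl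

lemma abs_D_le (n k j : ℕ) : |D ν c f₀ n (X ν c f₀ a0 n k) j| ≤ M ν c f₀ a0 j := by
  unfold D
  split
  · exact abs_dyadicRHS_le (a0 := a0) (c := c) hν hf j
      (X_nonneg hν hc hf hpos ha0 n k) (X_le_sB hν hc hf hpos ha0 n k)
  · simpa using (M_pos (a0 := a0) (c := c) hν hf j).le

lemma K_grid {n : ℕ} {t : ℝ} (ht : 0 ≤ t) :
    (K ν c f₀ a0 n t : ℝ) * hh ν c f₀ a0 n ≤ t ∧
      t < ((K ν c f₀ a0 n t : ℝ) + 1) * hh ν c f₀ a0 n := by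
  have hp := hh_pos (a0 := a0) (c := c) hν hf n
  have h1 : (K ν c f₀ a0 n t : ℝ) ≤ t / hh ν c f₀ a0 n := by
    unfold K; exact Nat.floor_le (div_nonneg ht hp.le)
  have h2 : t / hh ν c f₀ a0 n < (K ν c f₀ a0 n t : ℝ) + 1 := by
    unfold K; exact_mod_cast Nat.lt_floor_add_one (t / hh ν c f₀ a0 n)
  constructor
  · have := mul_le_mul_of_nonneg_right h1 hp.le
    rwa [div_mul_cancel₀ t hp.ne'] at this
  · have := mul_lt_mul_of_pos_right h2 hp
    rwa [div_mul_cancel₀ t hp.ne'] at this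

lemma K_mono {n : ℕ} {r t : ℝ} (hrt : r ≤ t) : K ν c f₀ a0 n r ≤ K ν c f₀ a0 n t := by
  have hp := hh_pos (a0 := a0) (c := c) hν hf n
  exact Nat.floor_mono (by gcongr)

lemma K_node (n k : ℕ) : K ν c f₀ a0 n ((k : ℝ) * hh ν c f₀ a0 n) = k := by
  have hp := hh_pos (a0 := a0) (c := c) hν hf n
  unfold K
  rw [mul_div_assoc, div_self hp.ne', mul_one, Nat.floor_natCast]

lemma A_node (n k j : ℕ) : A ν c f₀ a0 n ((k : ℝ) * hh ν c f₀ a0 n) j = X ν c f₀ a0 n k j := by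
  unfold A
  rw [K_node hν hc hf hpos ha0]
  ring_nf

lemma A_seg {n : ℕ} {ρ ρ' : ℝ} (hρ : 0 ≤ ρ) (hle : ρ ≤ ρ')
    (hub : ρ' ≤ ((K ν c f₀ a0 n ρ : ℝ) + 1) * hh ν c f₀ a0 n) (j : ℕ) :
    A ν c f₀ a0 n ρ' j - A ν c f₀ a0 n ρ j
      = (ρ' - ρ) * D ν c f₀ n (X ν c f₀ a0 n (K ν c f₀ a0 n ρ)) j := by
  have hp := hh_pos (a0 := a0) (c := c) hν hf n
  rcases lt_or_eq_of_le hub with hlt | heq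
  · have hKK : K ν c f₀ a0 n ρ' = K ν c f₀ a0 n ρ := by
      apply le_antisymm
      · apply Nat.le_of_lt_succ
        rw [Nat.lt_succ_iff, ← Nat.lt_succ_iff]
        apply Nat.floor_lt (div_nonneg (hρ.trans hle) hp.le) |>.mpr
        rw [div_lt_iff₀ hp]
        push_cast
        convert hlt using 2
      · exact K_mono hν hc hf hpos ha0 hle
    unfold A
    rw [hKK]
    ring
  · subst heq
    have hK' : K ν c f₀ a0 n (((K ν c f₀ a0 n ρ : ℝ) + 1) * hh ν c f₀ a0 n)
        = K ν c f₀ a0 n ρ + 1 := by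
      rw [show ((K ν c f₀ a0 n ρ : ℝ) + 1) = ((K ν c f₀ a0 n ρ + 1 : ℕ) : ℝ) by push_cast; ring,
        K_node hν hc hf hpos ha0]
    unfold A
    rw [hK', X_step hν hc hf hpos ha0]
    push_cast
    ring

lemma A_convex {n : ℕ} {t : ℝ} (ht : 0 ≤ t) (j : ℕ) :
    ∃ θ : ℝ, 0 ≤ θ ∧ θ ≤ 1 ∧
      A ν c f₀ a0 n t j = (1 - θ) * X ν c f₀ a0 n (K ν c f₀ a0 n t) j
        + θ * X ν c f₀ a0 n (K ν c f₀ a0 n t + 1) j := by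
  have hp := hh_pos (a0 := a0) (c := c) hν hf n
  obtain ⟨hlb, hub⟩ := K_grid (a0 := a0) hν hc hf hpos ha0 (n := n) ht
  refine ⟨(t - K ν c f₀ a0 n t * hh ν c f₀ a0 n) / hh ν c f₀ a0 n,
    div_nonneg (by linarith) hp.le, ?_, ?_⟩
  · rw [div_le_one hp]; linarith
  · rw [X_step hν hc hf hpos ha0]
    field_simp
    unfold A
    ring

lemma A_nonneg {n : ℕ} {t : ℝ} (ht : 0 ≤ t) (j : ℕ) : 0 ≤ A ν c f₀ a0 n t j := by
  obtain ⟨θ, h0, h1, heq⟩ := A_convex hν hc hf hpos ha0 ht (n := n) j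
  rw [heq]
  have := X_nonneg hν hc hf hpos ha0 n (K ν c f₀ a0 n t) j
  have := X_nonneg hν hc hf hpos ha0 n (K ν c f₀ a0 n t + 1) j
  nlinarith

lemma A_le_sB {n : ℕ} {t : ℝ} (ht : 0 ≤ t) (j : ℕ) : A ν c f₀ a0 n t j ≤ sB ν f₀ a0 := by
  obtain ⟨θ, h0, h1, heq⟩ := A_convex hν hc hf hpos ha0 ht (n := n) j
  rw [heq]
  have := X_le_sB hν hc hf hpos ha0 n (K ν c f₀ a0 n t) j
  have := X_le_sB hν hc hf hpos ha0 n (K ν c f₀ a0 n t + 1) j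
  nlinarith

lemma A_energy {n : ℕ} {t : ℝ} (ht : 0 ≤ t) (m : ℕ) :
    ∑ j ∈ Finset.range m, A ν c f₀ a0 n t j ^ 2 ≤ B ν f₀ a0 := by
  have hp := hh_pos (a0 := a0) (c := c) hν hf n
  obtain ⟨hlb, hub⟩ := K_grid (a0 := a0) hν hc hf hpos ha0 (n := n) ht
  set θ := (t - K ν c f₀ a0 n t * hh ν c f₀ a0 n) / hh ν c f₀ a0 n with hθ
  have h0 : 0 ≤ θ := by apply div_nonneg _ hp.le; linarith
  have h1 : θ ≤ 1 := by rw [hθ, div_le_one hp]; linarith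
  have hptw : ∀ j, A ν c f₀ a0 n t j ^ 2
      ≤ (1 - θ) * X ν c f₀ a0 n (K ν c f₀ a0 n t) j ^ 2
        + θ * X ν c f₀ a0 n (K ν c f₀ a0 n t + 1) j ^ 2 := by
    intro j
    have heq : A ν c f₀ a0 n t j = (1 - θ) * X ν c f₀ a0 n (K ν c f₀ a0 n t) j
        + θ * X ν c f₀ a0 n (K ν c f₀ a0 n t + 1) j := by
      rw [X_step hν hc hf hpos ha0, hθ]
      field_simp
      unfold A
      ring
    rw [heq]
    nlinarith [sq_nonneg (X ν c f₀ a0 n (K ν c f₀ a0 n t) j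
      - X ν c f₀ a0 n (K ν c f₀ a0 n t + 1) j), mul_nonneg h0 (sub_nonneg.2 h1)]
  calc ∑ j ∈ Finset.range m, A ν c f₀ a0 n t j ^ 2
      ≤ ∑ j ∈ Finset.range m, ((1 - θ) * X ν c f₀ a0 n (K ν c f₀ a0 n t) j ^ 2
        + θ * X ν c f₀ a0 n (K ν c f₀ a0 n t + 1) j ^ 2) :=
        Finset.sum_le_sum fun j _ => hptw j
    _ = (1 - θ) * ∑ j ∈ Finset.range m, X ν c f₀ a0 n (K ν c f₀ a0 n t) j ^ 2
        + θ * ∑ j ∈ Finset.range m, X ν c f₀ a0 n (K ν c f₀ a0 n t + 1) j ^ 2 := by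
        rw [Finset.mul_sum, Finset.mul_sum, Finset.sum_add_distrib]
    _ ≤ (1 - θ) * B ν f₀ a0 + θ * B ν f₀ a0 := by
        have b1 := X_energy hν hc hf hpos ha0 n (K ν c f₀ a0 n t) m
        have b2 := X_energy hν hc hf hpos ha0 n (K ν c f₀ a0 n t + 1) m
        have hB := B_pos (a0 := a0) hν hf
        nlinarith
    _ = B ν f₀ a0 := by ring

lemma A_lip_aux {n : ℕ} (i : ℕ) : ∀ m : ℕ, ∀ ρ t : ℝ, 0 ≤ ρ → ρ ≤ t →
    K ν c f₀ a0 n t ≤ K ν c f₀ a0 n ρ + m →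
    |A ν c f₀ a0 n t i - A ν c f₀ a0 n ρ i| ≤ M ν c f₀ a0 i * (t - ρ) := by
  intro m
  induction m with
  | zero =>
    intro ρ t hρ hρt hK
    have hKeq : K ν c f₀ a0 n t = K ν c f₀ a0 n ρ := by
      have := K_mono (a0 := a0) (n := n) hν hc hf hpos ha0 hρt
      omega
    have hub : t ≤ ((K ν c f₀ a0 n ρ : ℝ) + 1) * hh ν c f₀ a0 n := by
      have := (K_grid (a0 := a0) hν hc hf hpos ha0 (n := n) (hρ.trans hρt)).2
      rw [hKeq] at this
      linarith
    rw [A_seg hν hc hf hpos ha0 hρ hρt hub i, abs_mul, abs_of_nonneg (by linarith)]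
    rw [mul_comm]
    apply mul_le_mul_of_nonneg_right (abs_D_le hν hc hf hpos ha0 n _ i) (by linarith)
  | succ m IH =>
    intro ρ t hρ hρt hK
    by_cases hcase : K ν c f₀ a0 n t ≤ K ν c f₀ a0 n ρ + m
    · exact IH ρ t hρ hρt hcase
    · have hp := hh_pos (a0 := a0) (c := c) hν hf n
      set ρ' := ((K ν c f₀ a0 n ρ : ℝ) + 1) * hh ν c f₀ a0 n with hρ'def
      have hρρ' : ρ ≤ ρ' := le_of_lt (K_grid (a0 := a0) hν hc hf hpos ha0 (n := n) hρ).2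
      have hρ't : ρ' ≤ t := by
        have h1 : K ν c f₀ a0 n ρ + 1 ≤ K ν c f₀ a0 n t := by omega
        have h2 := (K_grid (a0 := a0) hν hc hf hpos ha0 (n := n) (hρ.trans hρt)).1
        calc ρ' = ((K ν c f₀ a0 n ρ + 1 : ℕ) : ℝ) * hh ν c f₀ a0 n := by push_cast; ring
          _ ≤ ((K ν c f₀ a0 n t : ℕ) : ℝ) * hh ν c f₀ a0 n := by
            apply mul_le_mul_of_nonneg_right _ hp.le
            exact_mod_cast h1
          _ ≤ t := h2
      have hKρ' : K ν c f₀ a0 n ρ' = K ν c f₀ a0 n ρ + 1 := by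
        have : ρ' = ((K ν c f₀ a0 n ρ + 1 : ℕ) : ℝ) * hh ν c f₀ a0 n := by push_cast; ring
        rw [this, K_node hν hc hf hpos ha0]
      have hseg := A_seg hν hc hf hpos ha0 hρ hρρ' (le_refl ρ') i
      have hIH := IH ρ' t (hρ.trans hρρ') hρ't (by omega)
      have habs : |A ν c f₀ a0 n ρ' i - A ν c f₀ a0 n ρ i| ≤ M ν c f₀ a0 i * (ρ' - ρ) := by
        rw [hseg, abs_mul, abs_of_nonneg (by linarith), mul_comm]
        apply mul_le_mul_of_nonneg_right (abs_D_le hν hc hf hpos ha0 n _ i) (by linarith)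
      calc |A ν c f₀ a0 n t i - A ν c f₀ a0 n ρ i|
          ≤ |A ν c f₀ a0 n t i - A ν c f₀ a0 n ρ' i|
            + |A ν c f₀ a0 n ρ' i - A ν c f₀ a0 n ρ i| := by
            calc |A ν c f₀ a0 n t i - A ν c f₀ a0 n ρ i|
                = |(A ν c f₀ a0 n t i - A ν c f₀ a0 n ρ' i)
                  + (A ν c f₀ a0 n ρ' i - A ν c f₀ a0 n ρ i)| := by rw [sub_add_sub_cancel]
              _ ≤ _ := abs_add_le _ _
        _ ≤ M ν c f₀ a0 i * (t - ρ') + M ν c f₀ a0 i * (ρ' - ρ) := add_le_add hIH habs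
        _ = M ν c f₀ a0 i * (t - ρ) := by ring

lemma A_lip {n : ℕ} (i : ℕ) {ρ t : ℝ} (hρ : 0 ≤ ρ) (ht : 0 ≤ t) :
    |A ν c f₀ a0 n t i - A ν c f₀ a0 n ρ i| ≤ M ν c f₀ a0 i * |t - ρ| := by
  rcases le_total ρ t with hle | hle
  · rw [show |t - ρ| = t - ρ from abs_of_nonneg (by linarith)]
    exact A_lip_aux hν hc hf hpos ha0 (n := n) i (K ν c f₀ a0 n t) ρ t hρ hle (by omega)
  · rw [show |t - ρ| = ρ - t from by rw [abs_of_nonpos (by linarith : t - ρ ≤ 0)]; ring,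
      abs_sub_comm]
    exact A_lip_aux hν hc hf hpos ha0 (n := n) i (K ν c f₀ a0 n ρ) t ρ ht hle (by omega)

end interp

section taylor

variable {ν c f₀ : ℝ} {a0 : ℕ → ℝ}
variable (hν : 0 < ν) (hc : 0 < c) (hf : 0 < f₀) (hpos : ∀ j : ℕ, 0 ≤ a0 j)
  (ha0 : Summable fun j : ℕ => a0 j ^ 2)

include hν hc hf hpos ha0

lemma taylor_cmp {n j : ℕ} (hj : j ≤ n) {r ρ t : ℝ} (hr : 0 ≤ r) (hrρ : r ≤ ρ) (hρt : ρ ≤ t) :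
    |dyadicRHS ν c f₀ (X ν c f₀ a0 n (K ν c f₀ a0 n ρ)) j
      - dyadicRHS ν c f₀ (A ν c f₀ a0 n r) j|
      ≤ L ν c f₀ a0 j * (M' ν c f₀ a0 j * (t - r + hh ν c f₀ a0 n)) := by
  have hp := hh_pos (a0 := a0) (c := c) hν hf n
  have hρ0 : 0 ≤ ρ := hr.trans hrρ
  have hKle := (K_grid (a0 := a0) hν hc hf hpos ha0 (n := n) hρ0).1
  have hKr := (K_grid (a0 := a0) hν hc hf hpos ha0 (n := n) hr).2
  have hKmono : (K ν c f₀ a0 n r : ℝ) ≤ (K ν c f₀ a0 n ρ : ℝ) := by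
    exact_mod_cast K_mono (a0 := a0) (n := n) hν hc hf hpos ha0 hrρ
  have hdist : |(K ν c f₀ a0 n ρ : ℝ) * hh ν c f₀ a0 n - r| ≤ t - r + hh ν c f₀ a0 n := by
    rw [abs_le]
    constructor
    · have : r - hh ν c f₀ a0 n ≤ (K ν c f₀ a0 n r : ℝ) * hh ν c f₀ a0 n := by nlinarith
      have h2 : (K ν c f₀ a0 n r : ℝ) * hh ν c f₀ a0 n
          ≤ (K ν c f₀ a0 n ρ : ℝ) * hh ν c f₀ a0 n := by nlinarith
      nlinarith
    · nlinarith
  have hM'nn : 0 ≤ M' ν c f₀ a0 j := (M'_pos (a0 := a0) (c := c) hν hf j).le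
  have hgen : ∀ i, M ν c f₀ a0 i ≤ M' ν c f₀ a0 j →
      |X ν c f₀ a0 n (K ν c f₀ a0 n ρ) i - A ν c f₀ a0 n r i|
        ≤ M' ν c f₀ a0 j * (t - r + hh ν c f₀ a0 n) := by
    intro i hi
    rw [← A_node hν hc hf hpos ha0 n (K ν c f₀ a0 n ρ) i]
    refine le_trans (A_lip hν hc hf hpos ha0 (n := n) i hr (by positivity)) ?_
    exact mul_le_mul hi hdist (abs_nonneg _) hM'nn
  have hM1 : M ν c f₀ a0 (j - 1) ≤ M' ν c f₀ a0 j := le_max_left _ _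
  have hM2 : M ν c f₀ a0 j ≤ M' ν c f₀ a0 j :=
    le_trans (le_max_left _ _) (le_max_right _ _)
  have hM3 : M ν c f₀ a0 (j + 1) ≤ M' ν c f₀ a0 j :=
    le_trans (le_max_right _ _) (le_max_right _ _)
  apply dyadicRHS_lip (a0 := a0) hν hf j
  · intro i
    rw [abs_of_nonneg (X_nonneg hν hc hf hpos ha0 n _ i)]
    exact X_le_sB hν hc hf hpos ha0 n _ i
  · intro i
    rw [abs_of_nonneg (A_nonneg hν hc hf hpos ha0 hr i)]
    exact A_le_sB hν hc hf hpos ha0 hr i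
  · exact hgen _ hM1
  · exact hgen _ hM2
  · exact hgen _ hM3

lemma taylor_aux {n j : ℕ} (hj : j ≤ n) {r : ℝ} (hr : 0 ≤ r) :
    ∀ m : ℕ, ∀ ρ t : ℝ, r ≤ ρ → ρ ≤ t →
    K ν c f₀ a0 n t ≤ K ν c f₀ a0 n ρ + m →
    |A ν c f₀ a0 n t j - A ν c f₀ a0 n ρ j
      - (t - ρ) * dyadicRHS ν c f₀ (A ν c f₀ a0 n r) j|
      ≤ (t - ρ) * (L ν c f₀ a0 j * (M' ν c f₀ a0 j * (t - r + hh ν c f₀ a0 n))) := by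
  intro m
  induction m with
  | zero =>
    intro ρ t hrρ hρt hK
    have hρ0 : 0 ≤ ρ := hr.trans hrρ
    have hKeq : K ν c f₀ a0 n t = K ν c f₀ a0 n ρ := by
      have := K_mono (a0 := a0) (n := n) hν hc hf hpos ha0 hρt
      omega
    have hub : t ≤ ((K ν c f₀ a0 n ρ : ℝ) + 1) * hh ν c f₀ a0 n := by
      have := (K_grid (a0 := a0) hν hc hf hpos ha0 (n := n) (hρ0.trans hρt)).2
      rw [hKeq] at this
      linarith
    rw [A_seg hν hc hf hpos ha0 hρ0 hρt hub j]
    unfold D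
    rw [if_pos hj]
    rw [show (t - ρ) * dyadicRHS ν c f₀ (X ν c f₀ a0 n (K ν c f₀ a0 n ρ)) j
        - (t - ρ) * dyadicRHS ν c f₀ (A ν c f₀ a0 n r) j
        = (t - ρ) * (dyadicRHS ν c f₀ (X ν c f₀ a0 n (K ν c f₀ a0 n ρ)) j
          - dyadicRHS ν c f₀ (A ν c f₀ a0 n r) j) from by ring]
    rw [abs_mul, abs_of_nonneg (by linarith : (0:ℝ) ≤ t - ρ)]
    exact mul_le_mul_of_nonneg_left (taylor_cmp hν hc hf hpos ha0 hj hr hrρ hρt) (by linarith)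
  | succ m IH =>
    intro ρ t hrρ hρt hK
    by_cases hcase : K ν c f₀ a0 n t ≤ K ν c f₀ a0 n ρ + m
    · exact IH ρ t hrρ hρt hcase
    · have hp := hh_pos (a0 := a0) (c := c) hν hf n
      have hρ0 : 0 ≤ ρ := hr.trans hrρ
      set ρ' := ((K ν c f₀ a0 n ρ : ℝ) + 1) * hh ν c f₀ a0 n with hρ'def
      have hρρ' : ρ ≤ ρ' := le_of_lt (K_grid (a0 := a0) hν hc hf hpos ha0 (n := n) hρ0).2
      have hρ't : ρ' ≤ t := by
        have h1 : K ν c f₀ a0 n ρ + 1 ≤ K ν c f₀ a0 n t := by omega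
        have h2 := (K_grid (a0 := a0) hν hc hf hpos ha0 (n := n) (hρ0.trans hρt)).1
        calc ρ' = ((K ν c f₀ a0 n ρ + 1 : ℕ) : ℝ) * hh ν c f₀ a0 n := by push_cast; ring
          _ ≤ ((K ν c f₀ a0 n t : ℕ) : ℝ) * hh ν c f₀ a0 n := by
            apply mul_le_mul_of_nonneg_right _ hp.le
            exact_mod_cast h1
          _ ≤ t := h2
      have hKρ' : K ν c f₀ a0 n ρ' = K ν c f₀ a0 n ρ + 1 := by
        rw [show ρ' = ((K ν c f₀ a0 n ρ + 1 : ℕ) : ℝ) * hh ν c f₀ a0 n by push_cast; ring,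
          K_node hν hc hf hpos ha0]
      have hIH := IH ρ' t (hrρ.trans hρρ') hρ't (by omega)
      have hseg := A_seg hν hc hf hpos ha0 hρ0 hρρ' (le_refl ρ') j
      have hsecond : |A ν c f₀ a0 n ρ' j - A ν c f₀ a0 n ρ j
          - (ρ' - ρ) * dyadicRHS ν c f₀ (A ν c f₀ a0 n r) j|
          ≤ (ρ' - ρ) * (L ν c f₀ a0 j * (M' ν c f₀ a0 j * (t - r + hh ν c f₀ a0 n))) := by
        rw [hseg]
        unfold D
        rw [if_pos hj]
        rw [show (ρ' - ρ) * dyadicRHS ν c f₀ (X ν c f₀ a0 n (K ν c f₀ a0 n ρ)) j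
            - (ρ' - ρ) * dyadicRHS ν c f₀ (A ν c f₀ a0 n r) j
            = (ρ' - ρ) * (dyadicRHS ν c f₀ (X ν c f₀ a0 n (K ν c f₀ a0 n ρ)) j
              - dyadicRHS ν c f₀ (A ν c f₀ a0 n r) j) from by ring]
        rw [abs_mul, abs_of_nonneg (by linarith : (0:ℝ) ≤ ρ' - ρ)]
        exact mul_le_mul_of_nonneg_left
          (taylor_cmp hν hc hf hpos ha0 hj hr hrρ (hρρ'.trans hρ't)) (by linarith)
      calc |A ν c f₀ a0 n t j - A ν c f₀ a0 n ρ j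
            - (t - ρ) * dyadicRHS ν c f₀ (A ν c f₀ a0 n r) j|
          = |(A ν c f₀ a0 n t j - A ν c f₀ a0 n ρ' j
              - (t - ρ') * dyadicRHS ν c f₀ (A ν c f₀ a0 n r) j)
            + (A ν c f₀ a0 n ρ' j - A ν c f₀ a0 n ρ j
              - (ρ' - ρ) * dyadicRHS ν c f₀ (A ν c f₀ a0 n r) j)| := by
            congr 1; ring
        _ ≤ _ + _ := abs_add_le _ _
        _ ≤ (t - ρ') * (L ν c f₀ a0 j * (M' ν c f₀ a0 j * (t - r + hh ν c f₀ a0 n)))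
            + (ρ' - ρ) * (L ν c f₀ a0 j * (M' ν c f₀ a0 j * (t - r + hh ν c f₀ a0 n))) :=
            add_le_add hIH hsecond
        _ = (t - ρ) * (L ν c f₀ a0 j * (M' ν c f₀ a0 j * (t - r + hh ν c f₀ a0 n))) := by ring

lemma A_taylor {n j : ℕ} (hj : j ≤ n) {t t' : ℝ} (ht : 0 ≤ t) (ht' : 0 ≤ t') :
    |A ν c f₀ a0 n t' j - A ν c f₀ a0 n t j
      - (t' - t) * dyadicRHS ν c f₀ (A ν c f₀ a0 n t) j|
      ≤ 2 * (L ν c f₀ a0 j * M' ν c f₀ a0 j) * (|t' - t| * (|t' - t| + hh ν c f₀ a0 n)) := by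
  have hp := hh_pos (a0 := a0) (c := c) hν hf n
  have hL := L_nonneg (a0 := a0) (c := c) hν hf j
  have hM' := (M'_pos (a0 := a0) (c := c) hν hf j).le
  rcases le_total t t' with hle | hle
  · have := taylor_aux hν hc hf hpos ha0 hj ht (K ν c f₀ a0 n t') t t' (le_refl t) hle
      (by omega)
    rw [show |t' - t| = t' - t from abs_of_nonneg (by linarith)]
    nlinarith [mul_nonneg hL hM', abs_nonneg (A ν c f₀ a0 n t' j - A ν c f₀ a0 n t j
      - (t' - t) * dyadicRHS ν c f₀ (A ν c f₀ a0 n t) j)]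
  · have hmain := taylor_aux hν hc hf hpos ha0 hj ht' (K ν c f₀ a0 n t) t' t (le_refl t') hle
      (by omega)
    have hFdiff : |dyadicRHS ν c f₀ (A ν c f₀ a0 n t') j
        - dyadicRHS ν c f₀ (A ν c f₀ a0 n t) j|
        ≤ L ν c f₀ a0 j * (M' ν c f₀ a0 j * (t - t')) := by
      have hM'nn : 0 ≤ M' ν c f₀ a0 j := (M'_pos (a0 := a0) (c := c) hν hf j).le
      have hgen' : ∀ i, M ν c f₀ a0 i ≤ M' ν c f₀ a0 j →
          |A ν c f₀ a0 n t' i - A ν c f₀ a0 n t i| ≤ M' ν c f₀ a0 j * (t - t') := by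
        intro i hi
        refine le_trans (A_lip hν hc hf hpos ha0 (n := n) i ht ht') ?_
        rw [show |t' - t| = t - t' from by
          rw [abs_of_nonpos (by linarith : t' - t ≤ 0)]; ring]
        exact mul_le_mul hi (le_refl _) (by linarith) hM'nn
      have hM1 : M ν c f₀ a0 (j - 1) ≤ M' ν c f₀ a0 j := le_max_left _ _
      have hM2 : M ν c f₀ a0 j ≤ M' ν c f₀ a0 j :=
        le_trans (le_max_left _ _) (le_max_right _ _)
      have hM3 : M ν c f₀ a0 (j + 1) ≤ M' ν c f₀ a0 j :=
        le_trans (le_max_right _ _) (le_max_right _ _)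
      apply dyadicRHS_lip (a0 := a0) hν hf j
      · intro i
        rw [abs_of_nonneg (A_nonneg hν hc hf hpos ha0 ht' i)]
        exact A_le_sB hν hc hf hpos ha0 ht' i
      · intro i
        rw [abs_of_nonneg (A_nonneg hν hc hf hpos ha0 ht i)]
        exact A_le_sB hν hc hf hpos ha0 ht i
      · exact hgen' _ hM1
      · exact hgen' _ hM2
      · exact hgen' _ hM3
    have hkey : |A ν c f₀ a0 n t' j - A ν c f₀ a0 n t j
        - (t' - t) * dyadicRHS ν c f₀ (A ν c f₀ a0 n t) j|
        ≤ |A ν c f₀ a0 n t j - A ν c f₀ a0 n t' j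
          - (t - t') * dyadicRHS ν c f₀ (A ν c f₀ a0 n t') j|
          + (t - t') * |dyadicRHS ν c f₀ (A ν c f₀ a0 n t') j
            - dyadicRHS ν c f₀ (A ν c f₀ a0 n t) j| := by
      calc |A ν c f₀ a0 n t' j - A ν c f₀ a0 n t j
            - (t' - t) * dyadicRHS ν c f₀ (A ν c f₀ a0 n t) j|
          = |(-(A ν c f₀ a0 n t j - A ν c f₀ a0 n t' j
              - (t - t') * dyadicRHS ν c f₀ (A ν c f₀ a0 n t') j))
            + (-((t - t') * (dyadicRHS ν c f₀ (A ν c f₀ a0 n t') j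
              - dyadicRHS ν c f₀ (A ν c f₀ a0 n t) j)))| := by
            congr 1; ring
        _ ≤ |(-(A ν c f₀ a0 n t j - A ν c f₀ a0 n t' j
              - (t - t') * dyadicRHS ν c f₀ (A ν c f₀ a0 n t') j))|
            + |(-((t - t') * (dyadicRHS ν c f₀ (A ν c f₀ a0 n t') j
              - dyadicRHS ν c f₀ (A ν c f₀ a0 n t) j)))| := abs_add_le _ _
        _ = |A ν c f₀ a0 n t j - A ν c f₀ a0 n t' j
              - (t - t') * dyadicRHS ν c f₀ (A ν c f₀ a0 n t') j|
            + |t - t'| * |dyadicRHS ν c f₀ (A ν c f₀ a0 n t') j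
              - dyadicRHS ν c f₀ (A ν c f₀ a0 n t) j| := by
            rw [abs_neg, abs_neg, abs_mul]
        _ = _ := by rw [show |t - t'| = t - t' from abs_of_nonneg (by linarith)]
    rw [show |t' - t| = t - t' from by rw [abs_of_nonpos (by linarith : t' - t ≤ 0)]; ring]
    have hprod : (t - t') * |dyadicRHS ν c f₀ (A ν c f₀ a0 n t') j
        - dyadicRHS ν c f₀ (A ν c f₀ a0 n t) j|
        ≤ (t - t') * (L ν c f₀ a0 j * (M' ν c f₀ a0 j * (t - t'))) :=
      mul_le_mul_of_nonneg_left hFdiff (by linarith)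
    nlinarith [mul_nonneg hL hM', mul_nonneg (mul_nonneg hL hM') hp.le]

end taylor

section limit

/-- an ultrafilter extending `atTop` on `ℕ` -/
noncomputable def U : Ultrafilter ℕ := Ultrafilter.of atTop

lemma U_ev {p : ℕ → Prop} (hp : ∀ᶠ n in atTop, p n) : ∀ᶠ n in (U : Filter ℕ), p n :=
  Ultrafilter.of_le atTop hp

lemma exists_lim (f : ℕ → ℝ) (b : ℝ) (hf : ∀ n, f n ∈ Set.Icc (0:ℝ) b) :
    ∃ x : ℝ, Tendsto f (U : Filter ℕ) (nhds x) ∧ 0 ≤ x ∧ x ≤ b := by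
  obtain ⟨x, hxmem, hx⟩ := (isCompact_Icc (a := (0:ℝ)) (b := b)).ultrafilter_le_nhds
    (Ultrafilter.map f U) (by
      rw [Ultrafilter.coe_map, le_principal_iff, mem_map]
      exact Filter.univ_mem' hf)
  refine ⟨x, ?_, hxmem.1, hxmem.2⟩
  rwa [Ultrafilter.coe_map] at hx

lemma A_zero_val {ν c f₀ : ℝ} {a0 : ℕ → ℝ} (n j : ℕ) :
    A ν c f₀ a0 n 0 j = if j ≤ n then a0 j else 0 := by
  have hK0 : K ν c f₀ a0 n 0 = 0 := by
    unfold K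
    rw [zero_div, Nat.floor_zero]
  unfold A
  rw [hK0]
  push_cast
  rw [show (0:ℝ) - 0 * hh ν c f₀ a0 n = 0 from by ring, zero_mul, add_zero]
  rfl

end limit
end Stmt10

/-- A solution of the dyadic model on `[0, ∞)`: an `l²`-valued function whose
components are differentiable on `[0, ∞)` and satisfy the dyadic system. -/
def IsSolution (ν c f₀ : ℝ) (a : ℝ → ℕ → ℝ) : Prop :=
  (∀ t : ℝ, 0 ≤ t → Summable (fun j : ℕ => a t j ^ 2)) ∧
  ∀ j : ℕ, ∀ t : ℝ, 0 ≤ t →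
    HasDerivWithinAt (fun s : ℝ => a s j) (dyadicRHS ν c f₀ (a t) j) (Set.Ici 0) t

/-- A fixed point of the dyadic model: an `l²` sequence `α` with
`ν 2^{2j} α_j - 2^{c(j-1)} α_{j-1}² + 2^{cj} α_j α_{j+1} = f_j` for all `j ≥ 0`. -/
def IsFixedPoint (ν c f₀ : ℝ) (α : ℕ → ℝ) : Prop :=
  (Summable fun j : ℕ => α j ^ 2) ∧
  ∀ j : ℕ, dyadicRHS ν c f₀ α j = 0

open Stmt10 in
theorem stmt_10 (ν c f₀ : ℝ) (hν : 0 < ν) (hc : 0 < c) (hf : 0 < f₀)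
    (a0 : ℕ → ℝ) (ha0 : Summable fun j : ℕ => a0 j ^ 2)
    (hpos : ∀ j : ℕ, 0 ≤ a0 j) :
    ∃ a : ℝ → ℕ → ℝ, IsSolution ν c f₀ a ∧ (∀ j : ℕ, a 0 j = a0 j) ∧
      ∀ t : ℝ, 0 ≤ t → ∀ j : ℕ, 0 ≤ a t j := by
  have hex : ∀ t : ℝ, ∀ j : ℕ, ∃ x : ℝ,
      Tendsto (fun n => A ν c f₀ a0 n (max t 0) j) (U : Filter ℕ) (nhds x) ∧
        0 ≤ x ∧ x ≤ sB ν f₀ a0 := by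
    intro t j
    apply exists_lim
    intro n
    exact ⟨A_nonneg hν hc hf hpos ha0 (le_max_right t 0) j,
      A_le_sB hν hc hf hpos ha0 (le_max_right t 0) j⟩
  choose a ha hann hale using hex
  have htt : ∀ t : ℝ, 0 ≤ t → ∀ j : ℕ,
      Tendsto (fun n => A ν c f₀ a0 n t j) (U : Filter ℕ) (nhds (a t j)) := by
    intro t ht j
    have := ha t j
    rwa [max_eq_left ht] at this
  -- convergence of the vector field
  have hg : ∀ t : ℝ, 0 ≤ t → ∀ j : ℕ,
      Tendsto (fun n => dyadicRHS ν c f₀ (A ν c f₀ a0 n t) j) (U : Filter ℕ)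
        (nhds (dyadicRHS ν c f₀ (a t) j)) := by
    intro t ht j
    have h1 := htt t ht j
    have h0 := htt t ht (j - 1)
    have h2 := htt t ht (j + 1)
    unfold dyadicRHS
    rcases eq_or_ne j 0 with hj0 | hj0
    · simp only [hj0, if_pos rfl]
      exact ((tendsto_const_nhds.sub (tendsto_const_nhds.mul (hj0 ▸ h1))).add
        tendsto_const_nhds).sub (((tendsto_const_nhds.mul (hj0 ▸ h1)).mul (hj0 ▸ h2)))
    · simp only [if_neg hj0]
      exact ((tendsto_const_nhds.sub (tendsto_const_nhds.mul h1)).add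
        (tendsto_const_nhds.mul (h0.pow 2))).sub ((tendsto_const_nhds.mul h1).mul h2)
  -- the quadratic Taylor estimate in the limit
  have hkey : ∀ j : ℕ, ∀ t t' : ℝ, 0 ≤ t → 0 ≤ t' →
      |a t' j - a t j - (t' - t) * dyadicRHS ν c f₀ (a t) j|
        ≤ 2 * (L ν c f₀ a0 j * M' ν c f₀ a0 j) * (|t' - t| * |t' - t|) := by
    intro j t t' ht ht'
    have hLHS : Tendsto (fun n => |A ν c f₀ a0 n t' j - A ν c f₀ a0 n t j
        - (t' - t) * dyadicRHS ν c f₀ (A ν c f₀ a0 n t) j|) (U : Filter ℕ)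
        (nhds |a t' j - a t j - (t' - t) * dyadicRHS ν c f₀ (a t) j|) :=
      (((htt t' ht' j).sub (htt t ht j)).sub (tendsto_const_nhds.mul (hg t ht j))).abs
    have hRHS : Tendsto (fun n => 2 * (L ν c f₀ a0 j * M' ν c f₀ a0 j)
        * (|t' - t| * (|t' - t| + hh ν c f₀ a0 n))) (U : Filter ℕ)
        (nhds (2 * (L ν c f₀ a0 j * M' ν c f₀ a0 j) * (|t' - t| * (|t' - t| + 0)))) := by
      apply Tendsto.const_mul
      apply Tendsto.const_mul
      apply Tendsto.const_add
      exact (hh_tendsto (a0 := a0) (c := c) hν hf).mono_left (Ultrafilter.of_le atTop)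
    rw [add_zero] at hRHS
    have hev : ∀ᶠ n in (U : Filter ℕ), |A ν c f₀ a0 n t' j - A ν c f₀ a0 n t j
        - (t' - t) * dyadicRHS ν c f₀ (A ν c f₀ a0 n t) j|
        ≤ 2 * (L ν c f₀ a0 j * M' ν c f₀ a0 j)
          * (|t' - t| * (|t' - t| + hh ν c f₀ a0 n)) := by
      apply U_ev
      filter_upwards [eventually_ge_atTop j] with n hn
      exact A_taylor hν hc hf hpos ha0 hn ht ht'
    exact le_of_tendsto_of_tendsto hLHS hRHS hev
  refine ⟨a, ⟨?_, ?_⟩, ?_, ?_⟩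
  -- summability
  · intro t ht
    apply summable_of_sum_range_le (c := B ν f₀ a0) (fun j => sq_nonneg _)
    intro m
    have hlim : Tendsto (fun n => ∑ j ∈ Finset.range m, A ν c f₀ a0 n t j ^ 2)
        (U : Filter ℕ) (nhds (∑ j ∈ Finset.range m, a t j ^ 2)) :=
      tendsto_finset_sum _ fun j _ => (htt t ht j).pow 2
    exact le_of_tendsto hlim (Filter.univ_mem'
      fun n => A_energy hν hc hf hpos ha0 ht m)
  -- derivative
  · intro j t ht
    rw [hasDerivWithinAt_iff_isLittleO]
    rw [Asymptotics.isLittleO_iff]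
    intro ε hε
    set Cj := 2 * (L ν c f₀ a0 j * M' ν c f₀ a0 j) with hCj
    have hCpos : 0 < Cj := by
      have hLpos : 0 < L ν c f₀ a0 j := by
        have h3 : (0:ℝ) < ν * (2 : ℝ) ^ (2 * j) := by positivity
        have h4 : (0:ℝ) ≤ ((2 : ℝ) ^ (c * ((j : ℝ) - 1)) + (2 : ℝ) ^ (c * (j : ℝ)))
            * (2 * sB ν f₀ a0) := by
          apply mul_nonneg _ (by nlinarith [sB_pos (a0 := a0) hν hf])
          positivity
        unfold L; linarith
      exact mul_pos (by norm_num) (mul_pos hLpos (M'_pos (a0 := a0) (c := c) hν hf j))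
    have hball : ∀ᶠ t' in nhdsWithin t (Set.Ici (0:ℝ)), |t' - t| < ε / Cj :=
      eventually_nhdsWithin_of_eventually_nhds (eventually_abs_sub_lt t (by positivity))
    filter_upwards [hball, self_mem_nhdsWithin] with t' hlt ht'
    have hq := hkey j t t' ht ht'
    rw [Real.norm_eq_abs, Real.norm_eq_abs, smul_eq_mul]
    calc |a t' j - a t j - (t' - t) * dyadicRHS ν c f₀ (a t) j|
        ≤ Cj * (|t' - t| * |t' - t|) := hq
      _ ≤ Cj * ((ε / Cj) * |t' - t|) := by
          apply mul_le_mul_of_nonneg_left _ hCpos.le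
          apply mul_le_mul_of_nonneg_right hlt.le (abs_nonneg _)
      _ = ε * |t' - t| := by field_simp
  -- initial condition
  · intro j
    have h1 := htt 0 le_rfl j
    have h2 : Tendsto (fun n => A ν c f₀ a0 n 0 j) (U : Filter ℕ) (nhds (a0 j)) := by
      apply Tendsto.congr' _ tendsto_const_nhds
      apply U_ev
      filter_upwards [eventually_ge_atTop j] with n hn
      rw [A_zero_val, if_pos hn]
    exact tendsto_nhds_unique h1 h2
  -- nonnegativity
  · intro t ht j
    exact hann t j
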